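/- For real numbers L_1, …, L_k, let p_i = e^{L_i}/(e^{L_i}+1) and q_i = 1 − p_i, and let P_even = Σ over binary vectors (z_1,…,z_k) with even parity of ∏_i p_i^{1−z_i} q_i^{z_i}, P_odd the analogous odd-parity sum. Then log(P_even/P_odd) = 2·atanh(∏_{i=1}^k tanh(L_i/2)). (This is the exact binary check-node LLR update rule.) -/

import Mathlib

noncomputable def atanh (x : ℝ) : ℝ := Real.log ((1 + x) / (1 - x)) / 2

/-!
Writing the parity indicator through the character `(-1) ^ (z₁ + ⋯ + zₖ)`, both the sum and the
difference of `P_even` and `P_odd` factor over the coordinates: they are `∏ (pᵢ + qᵢ) = 1` and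
`∏ (pᵢ - qᵢ) = ∏ tanh (Lᵢ / 2) =: T`. Hence `P_even = (1 + T) / 2`, `P_odd = (1 - T) / 2`, and
`log (P_even / P_odd) = 2 atanh T`.
-/

open Finset

theorem zmod_two_eq_zero_or_eq_one (s : ZMod 2) : s = 0 ∨ s = 1 := by
  revert s; decide

theorem ZMod.neg_one_pow_val_sum {ι R : Type*} [CommRing R] (s : Finset ι) (z : ι → ZMod 2) :
    (-1 : R) ^ (∑ i ∈ s, z i).val = ∏ i ∈ s, (-1 : R) ^ (z i).val := by
  classical
  induction s using Finset.induction with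
  | empty => simp
  | insert a s ha ih =>
    rw [sum_insert ha, prod_insert ha, ZMod.val_add, ← neg_one_pow_eq_pow_mod_two, pow_add, ih]

theorem ite_zero_add_ite_one {R : Type*} [Ring R] (s : ZMod 2) (x : R) :
    (if s = 0 then x else 0) + (if s = 1 then x else 0) = x := by
  obtain rfl | rfl := zmod_two_eq_zero_or_eq_one s <;> simp

theorem ite_zero_sub_ite_one {R : Type*} [Ring R] (s : ZMod 2) (x : R) :
    (if s = 0 then x else 0) - (if s = 1 then x else 0) = (-1) ^ s.val * x := by
  obtain rfl | rfl := zmod_two_eq_zero_or_eq_one s <;> simp [ZMod.val_one]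

section ParitySums

variable {ι R : Type*} [Fintype ι] [DecidableEq ι]

theorem sum_pi_zmod_two_prod [CommSemiring R] (f : ι → ZMod 2 → R) :
    ∑ z : ι → ZMod 2, ∏ i, f i (z i) = ∏ i, (f i 0 + f i 1) := by
  rw [← Fintype.prod_sum]
  exact prod_congr rfl fun i _ => Fin.sum_univ_two (f i)

variable [CommRing R]

theorem sum_pi_zmod_two_neg_one_pow_prod (f : ι → ZMod 2 → R) :
    ∑ z : ι → ZMod 2, (-1) ^ (∑ i, z i).val * ∏ i, f i (z i) = ∏ i, (f i 0 - f i 1) := by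
  simp_rw [ZMod.neg_one_pow_val_sum, ← prod_mul_distrib]
  exact (sum_pi_zmod_two_prod fun i s => (-1) ^ s.val * f i s).trans
    (prod_congr rfl fun i _ => by simp [ZMod.val_one, sub_eq_add_neg])

variable (a b : ι → R)

theorem even_parity_sum_add_odd_parity_sum :
    (∑ z : ι → ZMod 2, if ∑ i, z i = 0 then ∏ i, (if z i = 0 then a i else b i) else 0) +
      (∑ z : ι → ZMod 2, if ∑ i, z i = 1 then ∏ i, (if z i = 0 then a i else b i) else 0) =
      ∏ i, (a i + b i) := by
  rw [← sum_add_distrib]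
  simp_rw [ite_zero_add_ite_one]
  exact (sum_pi_zmod_two_prod fun i s => if s = 0 then a i else b i).trans (by simp)

theorem even_parity_sum_sub_odd_parity_sum :
    (∑ z : ι → ZMod 2, if ∑ i, z i = 0 then ∏ i, (if z i = 0 then a i else b i) else 0) -
      (∑ z : ι → ZMod 2, if ∑ i, z i = 1 then ∏ i, (if z i = 0 then a i else b i) else 0) =
      ∏ i, (a i - b i) := by
  rw [← sum_sub_distrib]
  simp_rw [ite_zero_sub_ite_one]
  exact (sum_pi_zmod_two_neg_one_pow_prod fun i s => if s = 0 then a i else b i).trans (by simp)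

end ParitySums

theorem two_mul_exp_div_exp_add_one_sub_one (x : ℝ) :
    2 * (Real.exp x / (Real.exp x + 1)) - 1 = Real.tanh (x / 2) := by
  have hx : Real.exp x = Real.exp (x / 2) ^ 2 := by rw [← Real.exp_nat_mul]; ring_nf
  rw [Real.tanh_eq, Real.exp_neg, hx]
  field_simp
  ring

theorem two_mul_atanh_sub_of_add_eq_one {a b : ℝ} (h : a + b = 1) :
    2 * atanh (a - b) = Real.log (a / b) := by
  rw [atanh, ← h]
  ring_nf

theorem check_node_llr_update_general
    (k : ℕ) (L : Fin k → ℝ) :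
    let p : Fin k → ℝ := fun i => Real.exp (L i) / (Real.exp (L i) + 1)
    let q : Fin k → ℝ := fun i => 1 - p i
    let Peven : ℝ := ∑ z : Fin k → ZMod 2,
      if (∑ i, z i) = (0 : ZMod 2) then ∏ i, (if z i = 0 then p i else q i) else 0
    let Podd : ℝ := ∑ z : Fin k → ZMod 2,
      if (∑ i, z i) = (1 : ZMod 2) then ∏ i, (if z i = 0 then p i else q i) else 0
    Real.log (Peven / Podd) = 2 * atanh (∏ i, Real.tanh (L i / 2)) := by
  intro p q Peven Podd
  have hsum : Peven + Podd = 1 := by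
    simpa [q] using even_parity_sum_add_odd_parity_sum p q
  have hdiff : Peven - Podd = ∏ i, Real.tanh (L i / 2) := by
    refine (even_parity_sum_sub_odd_parity_sum p q).trans (prod_congr rfl fun i _ => ?_)
    rw [← two_mul_exp_div_exp_add_one_sub_one]
    ring
  rw [← hdiff, two_mul_atanh_sub_of_add_eq_one hsum]

/-- exact binary check-node LLR update.  With `p_i = e^{L_i}/(e^{L_i}+1)`,
`q_i = 1 − p_i`, `P_even`/`P_odd` the total probabilities of even/odd parity binary
vectors, `log(P_even/P_odd) = 2·atanh(∏ tanh(L_i/2))`. -/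
theorem check_node_llr_update
    (k : ℕ) (hk : 1 ≤ k) (L : Fin k → ℝ) :
    let p : Fin k → ℝ := fun i => Real.exp (L i) / (Real.exp (L i) + 1)
    let q : Fin k → ℝ := fun i => 1 - p i
    let Peven : ℝ := ∑ z : Fin k → ZMod 2,
      if (∑ i, z i) = (0 : ZMod 2) then ∏ i, (if z i = 0 then p i else q i) else 0
    let Podd : ℝ := ∑ z : Fin k → ZMod 2,
      if (∑ i, z i) = (1 : ZMod 2) then ∏ i, (if z i = 0 then p i else q i) else 0
    Real.log (Peven / Podd) = 2 * atanh (∏ i, Real.tanh (L i / 2)) :=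
  check_node_llr_update_general k L
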